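/- arXiv:2305.14822 — 3 statements merged into one kernel-verified Lean document; each statement's English description precedes it below -/
import Mathlib

section
/- Let p and q be probability distributions on a finite set Z and α ≥ 0. If p is α-NAF with respect to q, i.e., p(z) ≤ e^α · q(z) for all z ∈ Z, then the total variation distance satisfies ‖p − q‖ ≤ 1 − e^{−α}. -/
open Finset Real

theorem stmt_3 {Z : Type*} [Fintype Z]
    (p q : Z → ℝ) (α : ℝ) (hα : 0 ≤ α)
    (hp : (∀ z, 0 ≤ p z) ∧ ∑ z, p z = 1)
    (hq : (∀ z, 0 ≤ q z) ∧ ∑ z, q z = 1)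
    (hnaf : ∀ z, p z ≤ Real.exp α * q z) :
    (1/2) * ∑ z, |p z - q z| ≤ 1 - Real.exp (-α) := by
  obtain ⟨hp0, hp1⟩ := hp
  obtain ⟨hq0, hq1⟩ := hq
  have hsum : ∑ z, (p z - q z) = 0 := by
    rw [Finset.sum_sub_distrib, hp1, hq1]; ring
  have key : (1/2) * ∑ z, |p z - q z| = ∑ z, max (p z - q z) 0 := by
    have : ∀ z : Z, |p z - q z| = 2 * max (p z - q z) 0 - (p z - q z) := by
      intro z; rcases le_total (p z - q z) 0 with h | h
      · rw [abs_of_nonpos h, max_eq_right h]; ring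
      · rw [abs_of_nonneg h, max_eq_left h]; ring
    simp only [this]
    rw [Finset.sum_sub_distrib, hsum, sub_zero, ← Finset.mul_sum]
    ring
  rw [key]
  have hb : ∀ z : Z, max (p z - q z) 0 ≤ (1 - Real.exp (-α)) * p z := by
    intro z
    have hexp : Real.exp (-α) ≤ 1 := Real.exp_le_one_iff.mpr (by linarith)
    have hq' : Real.exp (-α) * p z ≤ q z := by
      have := hnaf z
      have h2 : Real.exp (-α) * p z ≤ Real.exp (-α) * (Real.exp α * q z) :=
        mul_le_mul_of_nonneg_left this (Real.exp_nonneg _)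
      rwa [← mul_assoc, ← Real.exp_add, neg_add_cancel, Real.exp_zero, one_mul] at h2
    rcases le_total (p z - q z) 0 with h | h
    · rw [max_eq_right h]
      exact mul_nonneg (by linarith) (hp0 z)
    · rw [max_eq_left h]; nlinarith [hp0 z]
  calc ∑ z, max (p z - q z) 0 ≤ ∑ z, (1 - Real.exp (-α)) * p z :=
        Finset.sum_le_sum (fun z _ => hb z)
    _ = 1 - Real.exp (-α) := by rw [← Finset.mul_sum, hp1, mul_one]
end

section
/- If p is α-NAF with respect to two distributions q1 and q2 on a finite set Z (i.e., p(z) ≤ e^α q1(z) and p(z) ≤ e^α q2(z) for all z), then ‖q1 − q2‖ ≤ 2(1 − e^{−α}). -/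
open Finset Real

theorem stmt_4 {Z : Type*} [Fintype Z]
    (p q1 q2 : Z → ℝ) (α : ℝ) (hα : 0 ≤ α)
    (hp : (∀ z, 0 ≤ p z) ∧ ∑ z, p z = 1)
    (hq1 : (∀ z, 0 ≤ q1 z) ∧ ∑ z, q1 z = 1)
    (hq2 : (∀ z, 0 ≤ q2 z) ∧ ∑ z, q2 z = 1)
    (hnaf1 : ∀ z, p z ≤ Real.exp α * q1 z)
    (hnaf2 : ∀ z, p z ≤ Real.exp α * q2 z) :
    (1/2) * ∑ z, |q1 z - q2 z| ≤ 2 * (1 - Real.exp (-α)) := by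
  have hkey : ∀ z, |q1 z - q2 z| ≤
      (q1 z - Real.exp (-α) * p z) + (q2 z - Real.exp (-α) * p z) := by
    intro z
    have h1 : Real.exp (-α) * p z ≤ q1 z := by
      have := mul_le_mul_of_nonneg_left (hnaf1 z) (Real.exp_pos (-α)).le
      rwa [← mul_assoc, ← Real.exp_add, neg_add_cancel, Real.exp_zero, one_mul] at this
    have h2 : Real.exp (-α) * p z ≤ q2 z := by
      have := mul_le_mul_of_nonneg_left (hnaf2 z) (Real.exp_pos (-α)).le
      rwa [← mul_assoc, ← Real.exp_add, neg_add_cancel, Real.exp_zero, one_mul] at this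
    rw [abs_le]
    constructor <;> linarith
  have hsum : ∑ z, |q1 z - q2 z| ≤
      ∑ z, ((q1 z - Real.exp (-α) * p z) + (q2 z - Real.exp (-α) * p z)) :=
    Finset.sum_le_sum fun z _ => hkey z
  have heq : ∑ z, ((q1 z - Real.exp (-α) * p z) + (q2 z - Real.exp (-α) * p z))
      = 2 - 2 * Real.exp (-α) := by
    rw [Finset.sum_add_distrib, Finset.sum_sub_distrib, Finset.sum_sub_distrib,
      ← Finset.mul_sum, hq1.2, hq2.2, hp.2]
    ring
  have hε : Real.exp (-α) ≤ 1 := Real.exp_le_one_iff.mpr (by linarith)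
  linarith
end

section
/- There is no probability distribution p on a finite set Z that is α-NAF simultaneously with respect to two distributions q1, q2 whenever ‖q1 − q2‖ > 2(1 − e^{−α}). In particular, if q1 and q2 have disjoint supports (‖q1 − q2‖ = 1) and e^α < 2, no such p exists. -/
open Finset Real

theorem stmt_5 {Z : Type*} [Fintype Z]
    (q1 q2 : Z → ℝ) (α : ℝ) (hα : 0 ≤ α)
    (hq1 : (∀ z, 0 ≤ q1 z) ∧ ∑ z, q1 z = 1)
    (hq2 : (∀ z, 0 ≤ q2 z) ∧ ∑ z, q2 z = 1)
    (htv : (1/2) * ∑ z, |q1 z - q2 z| > 2 * (1 - Real.exp (-α))) :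
    ¬ ∃ p : Z → ℝ, (∀ z, 0 ≤ p z) ∧ ∑ z, p z = 1 ∧
      (∀ z, p z ≤ Real.exp α * q1 z) ∧ (∀ z, p z ≤ Real.exp α * q2 z) := by
  rintro ⟨p, hp0, hps, h1, h2⟩
  set T : ℝ := (1/2) * ∑ z, |q1 z - q2 z| with hT
  have hmin : ∑ z, min (q1 z) (q2 z) = 1 - T := by
    have : ∀ z, min (q1 z) (q2 z) = (q1 z + q2 z - |q1 z - q2 z|) / 2 := by
      intro z; rcases le_total (q1 z) (q2 z) with h | h
      · rw [min_eq_left h, abs_of_nonpos (by linarith)]; ring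
      · rw [min_eq_right h, abs_of_nonneg (by linarith)]; ring
    rw [Finset.sum_congr rfl (fun z _ => this z)]
    rw [← Finset.sum_div, Finset.sum_sub_distrib, Finset.sum_add_distrib, hq1.2, hq2.2]
    ring
  have hle : (1:ℝ) ≤ Real.exp α * (1 - T) := by
    calc (1:ℝ) = ∑ z, p z := hps.symm
    _ ≤ ∑ z, Real.exp α * min (q1 z) (q2 z) :=
        Finset.sum_le_sum fun z _ => le_min (h1 z) (h2 z) |>.trans
          (by rw [mul_min_of_nonneg _ _ (Real.exp_pos α).le])
    _ = Real.exp α * (1 - T) := by rw [← Finset.mul_sum, hmin]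
  have hTlt : T ≤ 1 - Real.exp (-α) := by
    have h := (div_le_iff₀ (Real.exp_pos α)).mpr (by linarith [hle] : (1:ℝ) ≤ (1 - T) * Real.exp α)
    rw [Real.exp_neg]
    have : Real.exp α ≠ 0 := (Real.exp_pos α).ne'
    have := (one_div (Real.exp α)) ▸ h
    linarith [h]
  have hexp : Real.exp (-α) ≤ 1 := Real.exp_le_one_iff.mpr (by linarith)
  have : 2 * (1 - Real.exp (-α)) ≥ 1 - Real.exp (-α) := by linarith
  linarith [htv]
end
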